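/- The trace-AMSE risk R(W) = tr(Ω⁻¹[(I-W)V₁(I-W)ᵀ + WV₂Wᵀ + (I-W)CWᵀ + WCᵀ(I-W)ᵀ + WΛWᵀ]) is strictly convex in W whenever the block matrix Σ = [[V₁, C],[Cᵀ, V₂]] is symmetric positive definite, Ω is symmetric positive definite, and Λ is symmetric positive semidefinite. -/

import Mathlib

/-!
Writing `N := V₁ + V₂ - C - Cᵀ + Λ`, the AMSE matrix `Q(W)` inside the trace satisfies
`Q(aX + bY) = a Q(X) + b Q(Y) - ab (X - Y) N (X - Y)ᵀ` whenever `a + b = 1`, so strict convexity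
amounts to `tr(Ω⁻¹ D N Dᵀ) > 0` for `D ≠ 0`. Here `N` is positive definite because
`V₁ + V₂ - C - Cᵀ` is the compression of `Σ` along `x ↦ (x, -x)`, and the trace is
`‖S D T‖²_F` for the positive square roots `S` of `Ω⁻¹` and `T` of `N`.
-/

open Matrix

theorem strictConvexOn_univ_of_eq_sub_mul_mul {E : Type*} [AddCommGroup E] [Module ℝ E]
    {f q : E → ℝ} (hq : ∀ d ≠ 0, 0 < q d)
    (hf : ∀ x y : E, ∀ a b : ℝ, a + b = 1 →
      f (a • x + b • y) = a * f x + b * f y - a * b * q (x - y)) :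
    StrictConvexOn ℝ Set.univ f := by
  refine ⟨convex_univ, fun x _ y _ hxy a b ha hb hab => ?_⟩
  rw [hf x y a b hab, smul_eq_mul, smul_eq_mul]
  have := mul_pos (mul_pos ha hb) (hq _ (sub_ne_zero_of_ne hxy))
  linarith

namespace Matrix

open scoped ComplexOrder

variable {m n 𝕜 : Type*} [Fintype m] [Fintype n] [DecidableEq m] [DecidableEq n] [RCLike 𝕜]

open scoped MatrixOrder in
theorem PosDef.exists_isUnit_isHermitian_mul_self {A : Matrix n n 𝕜} (hA : A.PosDef) :
    ∃ S : Matrix n n 𝕜, IsUnit S ∧ S.IsHermitian ∧ S * S = A :=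
  ⟨CFC.sqrt A, CFC.isUnit_sqrt_iff_isStrictlyPositive.mpr hA.isStrictlyPositive,
    (CFC.sqrt_nonneg A).posSemidef.isHermitian, CFC.sqrt_mul_sqrt_self A hA.posSemidef.nonneg⟩

theorem PosDef.trace_mul_mul_mul_conjTranspose_pos {A : Matrix m m 𝕜} {N : Matrix n n 𝕜}
    (hA : A.PosDef) (hN : N.PosDef) {D : Matrix m n 𝕜} (hD : D ≠ 0) :
    0 < (A * (D * N * Dᴴ)).trace := by
  obtain ⟨S, hSu, hSh, rfl⟩ := hA.exists_isUnit_isHermitian_mul_self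
  obtain ⟨T, hTu, hTh, rfl⟩ := hN.exists_isUnit_isHermitian_mul_self
  set E := S * D * T
  have hE : E ≠ 0 := by
    have := hSu.invertible
    have := hTu.invertible
    rwa [Ne, ← mul_right_inj_of_invertible S, ← mul_left_inj_of_invertible T, Matrix.mul_zero,
      Matrix.zero_mul] at hD
  have htrace : (S * S * (D * (T * T) * Dᴴ)).trace = (E * Eᴴ).trace := by
    simp only [E, conjTranspose_mul, hSh.eq, hTh.eq, Matrix.mul_assoc]
    rw [trace_mul_comm S]
    simp only [Matrix.mul_assoc]
  rw [htrace]
  exact (posSemidef_self_mul_conjTranspose E).trace_nonneg.lt_of_ne'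
    (trace_mul_conjTranspose_self_eq_zero_iff.not.mpr hE)

theorem PosDef.add_sub_sub_of_fromBlocks {A B D : Matrix n n 𝕜}
    (h : (fromBlocks A B Bᴴ D).PosDef) : (A + D - B - Bᴴ).PosDef := by
  have hinj : Function.Injective (fromRows (1 : Matrix n n 𝕜) (-1 : Matrix n n 𝕜)).mulVec := by
    intro x y hxy
    simpa using congr_arg (fun v => v ∘ Sum.inl) hxy
  convert h.conjTranspose_mul_mul_same hinj using 1
  simp only [conjTranspose_fromRows_eq_fromCols_conjTranspose, fromCols_mul_fromBlocks,
    fromCols_mul_fromRows, conjTranspose_one, conjTranspose_neg, Matrix.one_mul, Matrix.mul_one,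
    Matrix.neg_mul, Matrix.mul_neg]
  abel

end Matrix

section AMSE

variable {n R : Type*} [Fintype n] [DecidableEq n] [CommRing R]

def amse (V₁ V₂ C Λ W : Matrix n n R) : Matrix n n R :=
  (1 - W) * V₁ * (1 - W)ᵀ + W * V₂ * Wᵀ + (1 - W) * C * Wᵀ + W * Cᵀ * (1 - W)ᵀ + W * Λ * Wᵀ

theorem amse_add_smul (V₁ V₂ C Λ X Y : Matrix n n R) {a b : R} (hab : a + b = 1) :
    amse V₁ V₂ C Λ (a • X + b • Y) = a • amse V₁ V₂ C Λ X + b • amse V₁ V₂ C Λ Y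
      - (a * b) • ((X - Y) * (V₁ + V₂ - C - Cᵀ + Λ) * (X - Y)ᵀ) := by
  obtain rfl : b = 1 - a := eq_sub_of_add_eq' hab
  simp only [amse, transpose_add, transpose_sub, transpose_smul, transpose_one, Matrix.sub_mul,
    Matrix.mul_sub, Matrix.add_mul, Matrix.mul_add, Matrix.smul_mul, Matrix.mul_smul,
    Matrix.one_mul, Matrix.mul_one, smul_smul, smul_sub, smul_add, Matrix.mul_assoc]
  module

end AMSE

theorem stmt_12 {K : ℕ} (V₁ V₂ C Λ Ω : Matrix (Fin K) (Fin K) ℝ)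
    (hSigma : (Matrix.fromBlocks V₁ C Cᵀ V₂).PosDef)
    (hΩ : Ω.PosDef) (hΛ : Λ.PosSemidef) :
    StrictConvexOn ℝ Set.univ (fun W : Matrix (Fin K) (Fin K) ℝ =>
      Matrix.trace (Ω⁻¹ * ((1 - W) * V₁ * (1 - W)ᵀ + W * V₂ * Wᵀ
        + (1 - W) * C * Wᵀ + W * Cᵀ * (1 - W)ᵀ + W * Λ * Wᵀ))) := by
  rw [← conjTranspose_eq_transpose_of_trivial C] at hSigma
  have hN : (V₁ + V₂ - C - Cᵀ + Λ).PosDef := by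
    simpa using (PosDef.add_sub_sub_of_fromBlocks hSigma).add_posSemidef hΛ
  refine strictConvexOn_univ_of_eq_sub_mul_mul
    (q := fun D => (Ω⁻¹ * (D * (V₁ + V₂ - C - Cᵀ + Λ) * Dᵀ)).trace)
    (fun D hD => by simpa using hΩ.inv.trace_mul_mul_mul_conjTranspose_pos hN hD)
    (fun X Y a b hab => ?_)
  change (Ω⁻¹ * amse V₁ V₂ C Λ _).trace = a * (Ω⁻¹ * amse V₁ V₂ C Λ X).trace
    + b * (Ω⁻¹ * amse V₁ V₂ C Λ Y).trace - _
  simp only [amse_add_smul V₁ V₂ C Λ X Y hab, Matrix.mul_sub, Matrix.mul_add, Matrix.mul_smul,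
    trace_sub, trace_add, trace_smul, smul_eq_mul]
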